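/- arXiv:1302.4019 — 3 statements merged into one kernel-verified Lean document; each statement's English description precedes it below -/
import Mathlib

section
/- Let 0 ≤ W < 1 and suppose vectors x, x_s ∈ ℝⁿ satisfy ‖x_s − x‖ ≤ W‖x‖. Then ‖x − x_c‖ ≤ R, where x_c = x_s/(1 − W²) and R = W‖x_s‖/(1 − W²). -/
/-- Localization of the state in an n-sphere: if `‖x_s − x‖ ≤ W‖x‖` with `0 ≤ W < 1`,
then `‖x − x_c‖ ≤ R` with `x_c = x_s/(1−W²)` and `R = W‖x_s‖/(1−W²)`. -/
theorem stmt_2 (n : ℕ) (W : ℝ) (hW0 : 0 ≤ W) (hW1 : W < 1)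
    (x xs : EuclideanSpace ℝ (Fin n)) (h : ‖xs - x‖ ≤ W * ‖x‖) :
    ‖x - (1 / (1 - W ^ 2)) • xs‖ ≤ W * ‖xs‖ / (1 - W ^ 2) := by
  have hc : (0:ℝ) < 1 - W ^ 2 := by nlinarith
  have hkey : ‖(1 - W ^ 2) • x - xs‖ ≤ W * ‖xs‖ := by
    have h1 : ‖xs - x‖ ^ 2 ≤ (W * ‖x‖) ^ 2 := by
      have := norm_nonneg (xs - x)
      nlinarith
    have e1 : ‖xs - x‖ ^ 2 = ‖xs‖ ^ 2 - 2 * inner ℝ x xs + ‖x‖ ^ 2 := by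
      rw [norm_sub_sq_real, real_inner_comm]
    have e2 : ‖(1 - W ^ 2) • x - xs‖ ^ 2
        = (1 - W ^ 2) ^ 2 * ‖x‖ ^ 2 - 2 * (1 - W ^ 2) * inner ℝ x xs + ‖xs‖ ^ 2 := by
      rw [norm_sub_sq_real, norm_smul, real_inner_smul_left]
      simp [abs_of_pos hc]; ring
    have hsq : ‖(1 - W ^ 2) • x - xs‖ ^ 2 ≤ (W * ‖xs‖) ^ 2 := by
      rw [e2]; rw [e1] at h1; nlinarith
    have hWxs : 0 ≤ W * ‖xs‖ := mul_nonneg hW0 (norm_nonneg _)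
    nlinarith [norm_nonneg ((1 - W ^ 2) • x - xs)]
  have heq : x - (1 / (1 - W ^ 2)) • xs = (1 / (1 - W ^ 2)) • ((1 - W ^ 2) • x - xs) := by
    rw [smul_sub, smul_smul]
    field_simp
    rw [one_smul]
  rw [heq, norm_smul, Real.norm_eq_abs, abs_of_pos (by positivity : (0:ℝ) < 1 / (1 - W ^ 2))]
  rw [div_eq_mul_one_div (W * ‖xs‖), mul_comm (W * ‖xs‖)]
  gcongr
end

section
/- Let x : ℝ → ℝⁿ and e : ℝ → ℝ be differentiable functions with x(t) ≠ 0 and e(t) ≠ 0 on an interval, and suppose ‖ẋ(t)‖ ≤ L‖x(t)‖ + D‖E(t)‖ and |ė(t)| ≤ L_i‖x(t)‖ + D_i‖E(t)‖ for some function E with ‖E(t)‖ ≤ (W + ν(t))‖x(t)‖, where ν(t) = |e(t)|/‖x(t)‖. Then ν is differentiable and ν̇(t) ≤ L_i + D_i(W + ν) + (L + D(W + ν))·ν = a₀ + a₁ν + a₂ν², with a₀ = L_i + D_i W, a₁ = L + D_i + D W, and a₂ = D. -/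
open scoped RealInnerProductSpace

lemma norm_hasDerivAt' {F : Type*} [NormedAddCommGroup F] [InnerProductSpace ℝ F]
    {f : ℝ → F} {f' : F} {t : ℝ} (hf : HasDerivAt f f' t) (h0 : f t ≠ 0) :
    HasDerivAt (fun s => ‖f s‖) (⟪f t, f'⟫ / ‖f t‖) t := by
  have hfn : (0:ℝ) < ‖f t‖ := norm_pos_iff.mpr h0
  have hpos : (0:ℝ) < ‖f t‖ ^ 2 := by positivity
  have h1 : HasDerivAt (fun s => ‖f s‖ ^ 2) (2 * ⟪f t, f'⟫) t := hf.norm_sq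
  have h2 : HasDerivAt Real.sqrt (1 / (2 * Real.sqrt (‖f t‖ ^ 2))) (‖f t‖ ^ 2) :=
    (Real.hasStrictDerivAt_sqrt hpos.ne').hasDerivAt
  have h3 := h2.comp t h1
  have hs : Real.sqrt (‖f t‖ ^ 2) = ‖f t‖ := Real.sqrt_sq (norm_nonneg _)
  have heq : (fun s => Real.sqrt (‖f s‖ ^ 2)) = fun s => ‖f s‖ := by
    funext s; exact Real.sqrt_sq (norm_nonneg _)
  rw [Function.comp_def, heq] at h3
  refine h3.congr_deriv ?_
  rw [hs, div_mul_eq_mul_div, one_mul, mul_div_mul_left _ _ two_ne_zero]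

lemma abs_inner_div_le {F : Type*} [NormedAddCommGroup F] [InnerProductSpace ℝ F]
    (v w : F) (h0 : v ≠ 0) : |⟪v, w⟫ / ‖v‖| ≤ ‖w‖ := by
  have hv : (0:ℝ) < ‖v‖ := norm_pos_iff.mpr h0
  rw [abs_div, abs_of_pos hv, div_le_iff₀ hv]
  calc |⟪v, w⟫| ≤ ‖v‖ * ‖w‖ := abs_real_inner_le_norm _ _
    _ = ‖w‖ * ‖v‖ := mul_comm _ _

/-- Differential inequality for the ratio `ν = |e|/‖x‖`: under the Lipschitz-type
bounds on `ẋ` and `ė`, `ν` is differentiable and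
`ν̇ ≤ a₀ + a₁ ν + a₂ ν²` with `a₀ = Lᵢ + Dᵢ W`, `a₁ = L + Dᵢ + D W`, `a₂ = D`. -/
theorem stmt_4 (n : ℕ) (x : ℝ → EuclideanSpace ℝ (Fin n)) (e : ℝ → ℝ)
    (E : ℝ → EuclideanSpace ℝ (Fin n)) (L D Li Di W : ℝ)
    (hL : 0 ≤ L) (hD : 0 ≤ D) (hLi : 0 ≤ Li) (hDi : 0 ≤ Di) (hW : 0 ≤ W)
    (t : ℝ) (x' : EuclideanSpace ℝ (Fin n)) (e' : ℝ)
    (hx : HasDerivAt x x' t) (he : HasDerivAt e e' t)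
    (hxne : x t ≠ 0) (hene : e t ≠ 0)
    (hx' : ‖x'‖ ≤ L * ‖x t‖ + D * ‖E t‖)
    (he' : |e'| ≤ Li * ‖x t‖ + Di * ‖E t‖)
    (hE : ‖E t‖ ≤ (W + |e t| / ‖x t‖) * ‖x t‖) :
    DifferentiableAt ℝ (fun s => |e s| / ‖x s‖) t ∧
      deriv (fun s => |e s| / ‖x s‖) t ≤
        (Li + Di * W) + (L + Di + D * W) * (|e t| / ‖x t‖) +
          D * (|e t| / ‖x t‖) ^ 2 := by
  have hxn : (0:ℝ) < ‖x t‖ := norm_pos_iff.mpr hxne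
  have hNx : HasDerivAt (fun s => ‖x s‖) (⟪x t, x'⟫ / ‖x t‖) t := norm_hasDerivAt' hx hxne
  have hNe0 : HasDerivAt (fun s => ‖e s‖) (⟪e t, e'⟫ / ‖e t‖) t := norm_hasDerivAt' he hene
  have habs : (fun s => ‖e s‖) = fun s => |e s| := by funext s; exact Real.norm_eq_abs _
  rw [habs] at hNe0
  set σe := (⟪e t, e'⟫ / ‖e t‖ : ℝ)
  set σx := (⟪x t, x'⟫ / ‖x t‖ : ℝ)
  have hσe_le : σe ≤ |e'| := by
    calc σe ≤ |σe| := le_abs_self _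
      _ ≤ ‖e'‖ := abs_inner_div_le _ _ hene
      _ = |e'| := Real.norm_eq_abs _
  have hσx_le : -σx ≤ ‖x'‖ := by
    calc -σx ≤ |σx| := neg_le_abs _
      _ ≤ ‖x'‖ := abs_inner_div_le _ _ hxne
  have hdiv : HasDerivAt (fun s => |e s| / ‖x s‖)
      ((σe * ‖x t‖ - |e t| * σx) / (‖x t‖ ^ 2)) t := hNe0.div hNx hxn.ne'
  refine ⟨hdiv.differentiableAt, ?_⟩
  rw [hdiv.deriv]
  set ν := |e t| / ‖x t‖ with hν
  have hν0 : 0 ≤ ν := by positivity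
  have hK : ‖E t‖ / ‖x t‖ ≤ W + ν := by
    rw [div_le_iff₀ hxn]; exact hE
  have key : (σe * ‖x t‖ - |e t| * σx) / ‖x t‖ ^ 2 ≤
      (|e'| + ν * ‖x'‖) / ‖x t‖ := by
    rw [div_le_div_iff₀ (by positivity) hxn]
    have h1 : σe * ‖x t‖ ≤ |e'| * ‖x t‖ := by gcongr
    have h2 : |e t| * (-σx) ≤ |e t| * ‖x'‖ := by
      apply mul_le_mul_of_nonneg_left hσx_le (abs_nonneg _)
    have hνx : ν * ‖x t‖ = |e t| := by
      rw [hν, div_mul_cancel₀ _ hxn.ne']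
    calc (σe * ‖x t‖ - |e t| * σx) * ‖x t‖
        = σe * ‖x t‖ ^ 2 + (|e t| * -σx) * ‖x t‖ := by ring
      _ ≤ |e'| * ‖x t‖ ^ 2 + (|e t| * ‖x'‖) * ‖x t‖ :=
          add_le_add (mul_le_mul_of_nonneg_right hσe_le (sq_nonneg _))
            (mul_le_mul_of_nonneg_right h2 hxn.le)
      _ = (|e'| + ν * ‖x'‖) * ‖x t‖ ^ 2 := by rw [← hνx]; ring
  refine key.trans ?_
  have hEx : ‖E t‖ ≤ (W + ν) * ‖x t‖ := hE
  have h1 : |e'| / ‖x t‖ ≤ Li + Di * (W + ν) := by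
    rw [div_le_iff₀ hxn]
    calc |e'| ≤ Li * ‖x t‖ + Di * ‖E t‖ := he'
      _ ≤ Li * ‖x t‖ + Di * ((W + ν) * ‖x t‖) := by gcongr
      _ = (Li + Di * (W + ν)) * ‖x t‖ := by ring
  have h2 : ‖x'‖ / ‖x t‖ ≤ L + D * (W + ν) := by
    rw [div_le_iff₀ hxn]
    calc ‖x'‖ ≤ L * ‖x t‖ + D * ‖E t‖ := hx'
      _ ≤ L * ‖x t‖ + D * ((W + ν) * ‖x t‖) := by gcongr
      _ = (L + D * (W + ν)) * ‖x t‖ := by ring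
  have : (|e'| + ν * ‖x'‖) / ‖x t‖ = |e'| / ‖x t‖ + ν * (‖x'‖ / ‖x t‖) := by
    rw [add_div, mul_div_assoc]
  rw [this]
  have h3 : ν * (‖x'‖ / ‖x t‖) ≤ ν * (L + D * (W + ν)) :=
    mul_le_mul_of_nonneg_left h2 hν0
  nlinarith
end

section
/- Let A, B, K, P, Q be real matrices with P, Q symmetric positive definite, P(A+BK) + (A+BK)ᵀP = −Q, and let Q_m > 0 be the smallest eigenvalue of Q. Let 0 < σ < 1 and θ_1, …, θ_n > 0 with ∑θ_i ≤ 1. Suppose x, x_e ∈ ℝⁿ satisfy ‖x_{i,e}‖ ≤ (σθ_iQ_m/‖c_i(2PBK)‖)·‖x‖ for each i, where c_i(2PBK) is the i-th column of 2PBK and x_{i,e} is the i-th component of x_e. Then xᵀ[P(A+BK)+(A+BK)ᵀP]x + 2xᵀPBK x_e ≤ −(1−σ)·xᵀQx. -/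
open Matrix

/-- Core estimate for LTI systems: under the per-component measurement-error bounds
`|x_{i,e}| ≤ (σ θᵢ Q_m / ‖cᵢ(2PBK)‖) ‖x‖`, the Lyapunov derivative satisfies
`xᵀ[P(A+BK)+(A+BK)ᵀP]x + 2xᵀPBK x_e ≤ −(1−σ) xᵀQx`. -/
theorem stmt_7 (n m : ℕ) (A : Matrix (Fin n) (Fin n) ℝ) (B : Matrix (Fin n) (Fin m) ℝ)
    (K : Matrix (Fin m) (Fin n) ℝ) (P Q : Matrix (Fin n) (Fin n) ℝ)
    (hP : P.PosDef) (hQ : Q.PosDef)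
    (hLyap : P * (A + B * K) + (A + B * K)ᵀ * P = -Q)
    (Qm : ℝ) (hQm0 : 0 < Qm)
    (hQm : ∀ y : Fin n → ℝ, Qm * (y ⬝ᵥ y) ≤ y ⬝ᵥ Q.mulVec y)
    (σ : ℝ) (hσ : 0 < σ) (hσ1 : σ < 1) (θ : Fin n → ℝ) (hθ : ∀ i, 0 < θ i)
    (hθsum : ∑ i, θ i ≤ 1)
    (x xe : Fin n → ℝ)
    (hcol : ∀ i, Real.sqrt (∑ j, ((2 : ℝ) • (P * B * K)) j i ^ 2) ≠ 0)
    (hxe : ∀ i, |xe i| ≤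
      σ * θ i * Qm / Real.sqrt (∑ j, ((2 : ℝ) • (P * B * K)) j i ^ 2) *
        Real.sqrt (∑ j, x j ^ 2)) :
    x ⬝ᵥ (P * (A + B * K) + (A + B * K)ᵀ * P).mulVec x
        + 2 * (x ⬝ᵥ (P * B * K).mulVec xe)
      ≤ -(1 - σ) * (x ⬝ᵥ Q.mulVec x) := by
  set M := (2 : ℝ) • (P * B * K) with hM
  set s := Real.sqrt (∑ j, x j ^ 2) with hs
  have hs0 : 0 ≤ s := Real.sqrt_nonneg _
  have hsq : s ^ 2 = ∑ j, x j ^ 2 := Real.sq_sqrt (by positivity)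
  have h1 : x ⬝ᵥ (P * (A + B * K) + (A + B * K)ᵀ * P).mulVec x = -(x ⬝ᵥ Q.mulVec x) := by
    rw [hLyap]; simp [Matrix.neg_mulVec]
  have key : 2 * (x ⬝ᵥ (P * B * K).mulVec xe) = ∑ i, (∑ j, x j * M j i) * xe i := by
    simp only [hM, Matrix.smul_apply, smul_eq_mul, dotProduct, Matrix.mulVec, Finset.mul_sum,
      Finset.sum_mul]
    rw [Finset.sum_comm]
    apply Finset.sum_congr rfl
    intro i _
    apply Finset.sum_congr rfl
    intro j _
    ring
  have hterm : ∀ i, (∑ j, x j * M j i) * xe i ≤ σ * θ i * Qm * s ^ 2 := by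
    intro i
    have hci0 : 0 < Real.sqrt (∑ j, M j i ^ 2) :=
      lt_of_le_of_ne (Real.sqrt_nonneg _) (Ne.symm (hcol i))
    have hCS : |∑ j, x j * M j i| ≤ s * Real.sqrt (∑ j, M j i ^ 2) := by
      rw [abs_le]
      constructor
      · have h := Real.sum_mul_le_sqrt_mul_sqrt Finset.univ (fun j => -x j) (fun j => M j i)
        simp only [neg_mul, Finset.sum_neg_distrib, neg_sq] at h
        linarith
      · exact Real.sum_mul_le_sqrt_mul_sqrt Finset.univ x (fun j => M j i)
    have hx := hxe i
    calc (∑ j, x j * M j i) * xe i ≤ |(∑ j, x j * M j i) * xe i| := le_abs_self _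
      _ = |∑ j, x j * M j i| * |xe i| := abs_mul _ _
      _ ≤ (s * Real.sqrt (∑ j, M j i ^ 2)) *
          (σ * θ i * Qm / Real.sqrt (∑ j, M j i ^ 2) * s) := by
          apply mul_le_mul hCS hx (abs_nonneg _)
          positivity
      _ = σ * θ i * Qm * s ^ 2 := by
          field_simp
  have hsum : ∑ i, (∑ j, x j * M j i) * xe i ≤ σ * Qm * s ^ 2 := by
    calc ∑ i, (∑ j, x j * M j i) * xe i ≤ ∑ i, σ * θ i * Qm * s ^ 2 :=
          Finset.sum_le_sum fun i _ => hterm i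
      _ = (σ * Qm * s ^ 2) * ∑ i, θ i := by
          rw [Finset.mul_sum]; exact Finset.sum_congr rfl fun i _ => by ring
      _ ≤ (σ * Qm * s ^ 2) * 1 := by
          apply mul_le_mul_of_nonneg_left hθsum
          positivity
      _ = σ * Qm * s ^ 2 := mul_one _
  have hQx : Qm * s ^ 2 ≤ x ⬝ᵥ Q.mulVec x := by
    have := hQm x
    have hxx : x ⬝ᵥ x = s ^ 2 := by rw [hsq]; simp [dotProduct, pow_two]
    linarith [hQm x, hxx ▸ hQm x]
  have hQx' : σ * Qm * s ^ 2 ≤ σ * (x ⬝ᵥ Q.mulVec x) := by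
    have := mul_le_mul_of_nonneg_left hQx (le_of_lt hσ)
    linarith
  rw [h1, key]
  linarith
end
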